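/- arXiv:2601.04863 — 3 statements merged into one kernel-verified Lean document; each statement's English description precedes it below -/
import Mathlib

section
/- For any nonnegative real random variable x and any q > 0, the integral over t from 0 to infinity of q·t^(q-1)·P(x > t)^2 dt is at most 2·E(x^(q/2))^2. -/
open MeasureTheory ENNReal

/-- For any nonnegative real random variable `x` and any `q > 0`, the integral
`∫₀^∞ q t^(q-1) ℙ(x > t)² dt` is at most `2 E(x^(q/2))²`. -/
theorem stmt_0 {Ω : Type*} [MeasurableSpace Ω] (ℙ : Measure Ω) [IsProbabilityMeasure ℙ]
    (x : Ω → ℝ) (hx : Measurable x) (hx0 : ∀ ω, 0 ≤ x ω) (q : ℝ) (hq : 0 < q) :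
    ∫⁻ t in Set.Ioi (0 : ℝ), ENNReal.ofReal (q * t ^ (q - 1)) * (ℙ {ω | x ω > t}) ^ 2
      ≤ 2 * (∫⁻ ω, ENNReal.ofReal (x ω ^ (q / 2)) ∂ℙ) ^ 2 := by
  set E : ℝ≥0∞ := ∫⁻ ω, ENNReal.ofReal (x ω ^ (q / 2)) ∂ℙ with hE
  have hq2 : 0 < q / 2 := by linarith
  -- layer cake for x^(q/2)
  have layer : E = ENNReal.ofReal (q / 2) *
      ∫⁻ t in Set.Ioi (0 : ℝ), ℙ {ω | t < x ω} * ENNReal.ofReal (t ^ (q / 2 - 1)) :=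
    lintegral_rpow_eq_lintegral_meas_lt_mul ℙ (Filter.Eventually.of_forall hx0)
      hx.aemeasurable hq2
  -- Markov: for t > 0, ofReal (t ^ (q/2)) * ℙ {x > t} ≤ E
  have markov : ∀ t : ℝ, 0 < t →
      ENNReal.ofReal (t ^ (q / 2)) * ℙ {ω | t < x ω} ≤ E := by
    intro t ht
    have hsub : {ω | t < x ω} ⊆
        {ω | ENNReal.ofReal (t ^ (q / 2)) ≤ ENNReal.ofReal (x ω ^ (q / 2))} := by
      intro ω hω
      exact ENNReal.ofReal_le_ofReal
        (Real.rpow_le_rpow ht.le (le_of_lt hω) hq2.le)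
    calc ENNReal.ofReal (t ^ (q / 2)) * ℙ {ω | t < x ω}
        ≤ ENNReal.ofReal (t ^ (q / 2)) *
          ℙ {ω | ENNReal.ofReal (t ^ (q / 2)) ≤ ENNReal.ofReal (x ω ^ (q / 2))} :=
          mul_le_mul_right (measure_mono hsub) _
      _ ≤ E := mul_meas_ge_le_lintegral₀
          ((hx.pow measurable_const).ennreal_ofReal.aemeasurable) _
  -- pointwise bound on Ioi 0
  have key : ∀ t ∈ Set.Ioi (0 : ℝ),
      ENNReal.ofReal (q * t ^ (q - 1)) * (ℙ {ω | x ω > t}) ^ 2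
        ≤ 2 * E * (ENNReal.ofReal (q / 2) *
            (ℙ {ω | t < x ω} * ENNReal.ofReal (t ^ (q / 2 - 1)))) := by
    intro t ht
    rw [Set.mem_Ioi] at ht
    have hfact : q * t ^ (q - 1) = 2 * (t ^ (q / 2) * (q / 2 * t ^ (q / 2 - 1))) := by
      have : t ^ (q / 2) * t ^ (q / 2 - 1) = t ^ (q - 1) := by
        rw [← Real.rpow_add ht]; ring_nf
      rw [show t ^ (q/2) * (q/2 * t ^ (q/2-1)) = q/2 * (t ^ (q/2) * t ^ (q/2-1)) by ring,
        this]; ring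
    have h1 : ENNReal.ofReal (q * t ^ (q - 1)) * (ℙ {ω | x ω > t}) ^ 2
        = 2 * ((ENNReal.ofReal (t ^ (q / 2)) * ℙ {ω | t < x ω}) *
            (ENNReal.ofReal (q / 2) * (ℙ {ω | t < x ω} * ENNReal.ofReal (t ^ (q / 2 - 1))))) := by
      rw [hfact, ENNReal.ofReal_mul (by norm_num), ENNReal.ofReal_mul
        (Real.rpow_nonneg ht.le _), ENNReal.ofReal_mul hq2.le]
      have : ENNReal.ofReal 2 = 2 := by norm_num
      rw [this]; ring
    rw [h1]
    have := markov t ht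
    calc 2 * ((ENNReal.ofReal (t ^ (q / 2)) * ℙ {ω | t < x ω}) *
            (ENNReal.ofReal (q / 2) * (ℙ {ω | t < x ω} * ENNReal.ofReal (t ^ (q / 2 - 1)))))
        ≤ 2 * (E * (ENNReal.ofReal (q / 2) *
            (ℙ {ω | t < x ω} * ENNReal.ofReal (t ^ (q / 2 - 1))))) := by gcongr
      _ = _ := by ring
  by_cases hEtop : E = ⊤
  · rw [hEtop]
    simp [ENNReal.top_pow]
  calc ∫⁻ t in Set.Ioi (0 : ℝ), ENNReal.ofReal (q * t ^ (q - 1)) * (ℙ {ω | x ω > t}) ^ 2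
      ≤ ∫⁻ t in Set.Ioi (0 : ℝ), 2 * E * (ENNReal.ofReal (q / 2) *
          (ℙ {ω | t < x ω} * ENNReal.ofReal (t ^ (q / 2 - 1)))) := by
        refine setLIntegral_mono' measurableSet_Ioi key
    _ = 2 * E * (ENNReal.ofReal (q / 2) *
          ∫⁻ t in Set.Ioi (0 : ℝ), ℙ {ω | t < x ω} * ENNReal.ofReal (t ^ (q / 2 - 1))) := by
        rw [lintegral_const_mul' _ _ (ENNReal.mul_ne_top (by norm_num) hEtop), lintegral_const_mul' _ _ ENNReal.ofReal_ne_top]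
    _ = 2 * E * E := by rw [← layer]
    _ = 2 * E ^ 2 := by ring
end

section
/- Let (S_{m,n})_{0≤m≤n} be a family of elements of an abelian group V, with S_{n,n} = 0, and define ΔS(l,m,n) = S_{l,n} − S_{l,m} − S_{m,n}. Then for every n ≥ 1: S_{0,n} = Σ_{k=0}^{n−1} S_{k,k+1} + Σ_{j=1}^{⌊log₂ n⌋} [ ΔS(0, ⌊n⌋_{2^j}, ⌊n⌋_{2^{j−1}}) + Σ_{k=0}^{⌊n/2^j⌋−1} ΔS(2^j k, 2^j k + 2^{j−1}, 2^j(k+1)) ], where ⌊n⌋_r = r·⌊n/r⌋. -/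
set_option maxHeartbeats 800000


open Finset

private lemma sum_double' {V : Type*} [AddCommMonoid V] (f : ℕ → V) (q : ℕ) :
    ∑ k ∈ range (2 * q), f k = ∑ k ∈ range q, (f (2 * k) + f (2 * k + 1)) := by
  induction q with
  | zero => simp
  | succ q ih =>
    have : 2 * (q + 1) = (2 * q + 1) + 1 := by ring
    rw [this, Finset.sum_range_succ, Finset.sum_range_succ, ih, Finset.sum_range_succ]
    abel

private lemma step_lemma {V : Type*} [AddCommGroup V] (S : ℕ → ℕ → V) (hdiag : ∀ n, S n n = 0)
    (n i : ℕ) :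
    (S 0 (2 ^ i * (n / 2 ^ i)) - S 0 (2 ^ (i + 1) * (n / 2 ^ (i + 1)))
        - S (2 ^ (i + 1) * (n / 2 ^ (i + 1))) (2 ^ i * (n / 2 ^ i))) +
      ∑ k ∈ range (n / 2 ^ (i + 1)),
        (S (2 ^ (i + 1) * k) (2 ^ (i + 1) * (k + 1))
          - S (2 ^ (i + 1) * k) (2 ^ (i + 1) * k + 2 ^ i)
          - S (2 ^ (i + 1) * k + 2 ^ i) (2 ^ (i + 1) * (k + 1)))
    = (S 0 (2 ^ i * (n / 2 ^ i)) - ∑ k ∈ range (n / 2 ^ i), S (2 ^ i * k) (2 ^ i * (k + 1)))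
      - (S 0 (2 ^ (i + 1) * (n / 2 ^ (i + 1)))
        - ∑ k ∈ range (n / 2 ^ (i + 1)), S (2 ^ (i + 1) * k) (2 ^ (i + 1) * (k + 1))) := by
  set q := n / 2 ^ (i + 1) with hqdef
  set q' := n / 2 ^ i with hq'def
  have hdiv : q = q' / 2 := by
    rw [hqdef, hq'def, Nat.div_div_eq_div_mul, pow_succ]
  have h2 : ∀ k, 2 ^ i * (2 * k) = 2 ^ (i + 1) * k := by intro k; ring
  have h3 : ∀ k, 2 ^ i * (2 * k + 1) = 2 ^ (i + 1) * k + 2 ^ i := by intro k; ring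
  have h4 : ∀ k, 2 ^ i * (2 * k + 1 + 1) = 2 ^ (i + 1) * (k + 1) := by intro k; ring
  have key : ∑ k ∈ range q', S (2 ^ i * k) (2 ^ i * (k + 1))
      = (∑ k ∈ range q, S (2 ^ (i + 1) * k) (2 ^ (i + 1) * k + 2 ^ i))
        + (∑ k ∈ range q, S (2 ^ (i + 1) * k + 2 ^ i) (2 ^ (i + 1) * (k + 1)))
        + S (2 ^ (i + 1) * q) (2 ^ i * q') := by
    rw [← Finset.sum_add_distrib]
    rcases Nat.even_or_odd q' with ⟨m, hm⟩ | ⟨m, hm⟩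
    · have hm' : q' = 2 * m := by omega
      have hqm : q = m := by rw [hdiv, hm']; omega
      have hz : S (2 ^ (i + 1) * q) (2 ^ i * q') = 0 := by
        rw [show 2 ^ (i + 1) * q = 2 ^ i * q' by rw [hm', hqm]; ring]
        exact hdiag _
      rw [hz, add_zero, hqm]
      rw [show (range q' : Finset ℕ) = range (2 * m) from by rw [hm']]
      rw [sum_double']
      exact Finset.sum_congr rfl fun k _ => by rw [h2, h3, h4]
    · have hqm : q = m := by rw [hdiv, hm]; omega
      have e1 : 2 ^ i * (2 * m) = 2 ^ (i + 1) * q := by rw [hqm]; ring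
      have e2 : 2 ^ i * (2 * m + 1) = 2 ^ i * q' := by rw [hm]
      rw [show (range q' : Finset ℕ) = range (2 * m + 1) from by rw [hm]]
      rw [Finset.sum_range_succ, sum_double', e1, e2, hqm]
      congr 1
      exact Finset.sum_congr rfl fun k _ => by rw [h2, h3, h4]
  rw [Finset.sum_sub_distrib, Finset.sum_sub_distrib, key]
  abel

/-- The dyadic dichotomy decomposition of a non-additive process: for `n ≥ 1`,
`S_{0,n} = Σ_{k<n} S_{k,k+1} + Σ_{j=1}^{⌊log₂ n⌋} [ΔS(0, ⌊n⌋_{2^j}, ⌊n⌋_{2^{j−1}})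
 + Σ_{k<⌊n/2^j⌋} ΔS(2^j k, 2^j k + 2^{j−1}, 2^j (k+1))]`. -/
theorem stmt_6 {V : Type*} [AddCommGroup V] (S : ℕ → ℕ → V) (hdiag : ∀ n, S n n = 0)
    (ΔS : ℕ → ℕ → ℕ → V) (hΔ : ∀ l m n, ΔS l m n = S l n - S l m - S m n)
    (n : ℕ) (hn : 1 ≤ n) :
    S 0 n = (∑ k ∈ range n, S k (k + 1)) +
      ∑ j ∈ Icc 1 (Nat.log 2 n),
        (ΔS 0 (2 ^ j * (n / 2 ^ j)) (2 ^ (j - 1) * (n / 2 ^ (j - 1))) +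
          ∑ k ∈ range (n / 2 ^ j),
            ΔS (2 ^ j * k) (2 ^ j * k + 2 ^ (j - 1)) (2 ^ j * (k + 1))) := by
  set L := Nat.log 2 n with hL
  set G : ℕ → V := fun i =>
    S 0 (2 ^ i * (n / 2 ^ i)) - ∑ k ∈ range (n / 2 ^ i), S (2 ^ i * k) (2 ^ i * (k + 1))
    with hG
  have hsum : ∑ j ∈ Icc 1 L,
      (ΔS 0 (2 ^ j * (n / 2 ^ j)) (2 ^ (j - 1) * (n / 2 ^ (j - 1))) +
        ∑ k ∈ range (n / 2 ^ j),
          ΔS (2 ^ j * k) (2 ^ j * k + 2 ^ (j - 1)) (2 ^ j * (k + 1)))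
      = G 0 - G L := by
    rw [show Icc 1 L = Ico 1 (L + 1) from rfl, Finset.sum_Ico_eq_sum_range]
    simp only [Nat.add_sub_cancel]
    have hconv : ∀ i ∈ range L,
        (ΔS 0 (2 ^ (1 + i) * (n / 2 ^ (1 + i))) (2 ^ (1 + i - 1) * (n / 2 ^ (1 + i - 1))) +
          ∑ k ∈ range (n / 2 ^ (1 + i)),
            ΔS (2 ^ (1 + i) * k) (2 ^ (1 + i) * k + 2 ^ (1 + i - 1)) (2 ^ (1 + i) * (k + 1)))
        = G i - G (i + 1) := by
      intro i _
      rw [show 1 + i = i + 1 from Nat.add_comm 1 i]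
      simp only [Nat.add_sub_cancel, hΔ, hG]
      exact step_lemma S hdiag n i
    rw [Finset.sum_congr rfl hconv, Finset.sum_range_sub' G]
  rw [hsum]
  have hG0 : G 0 = S 0 n - ∑ k ∈ range n, S k (k + 1) := by
    simp only [hG, pow_zero, Nat.div_one, one_mul]
  have hGL : G L = 0 := by
    have h1 : 2 ^ L ≤ n := Nat.pow_log_le_self 2 (by omega)
    have h2 : n < 2 ^ (L + 1) := Nat.lt_pow_succ_log_self (by norm_num) n
    have hq : n / 2 ^ L = 1 := by
      apply Nat.div_eq_of_lt_le
      · simpa using h1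
      · rw [pow_succ, mul_comm] at h2; simpa using h2
    simp only [hG, hq, mul_one]
    rw [Finset.sum_range_one]
    simp [hdiag]
  rw [hG0, hGL]
  abel
end

section
/- Let Γ be a semigroup, V a Banach space, N : Γ → [0,∞) subadditive and κ : Γ → V a map with ‖κ(gh) − κ(g) − κ(h)‖ ≤ min{N(g), N(h)} for all g, h ∈ Γ. Then for any finite word (γ_a, …, γ_{b−1}) in Γ, the defect satisfies ‖κ(γ_a⋯γ_{b−1}) − Σ_{k=a}^{b−1} κ(γ_k)‖ ≤ Σ_{k=a}^{b−1} N(γ_k) − max_{a≤k<b} N(γ_k). -/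
open Finset

/-- `sgProd γ a m = γ_a * γ_{a+1} * ⋯ * γ_{a+m}` in a semigroup. -/
def sgProd {Γ : Type*} [Semigroup Γ] (γ : ℕ → Γ) (a : ℕ) : ℕ → Γ
  | 0 => γ a
  | m + 1 => sgProd γ a m * γ (a + m + 1)

lemma sgProd_cons {Γ : Type*} [Semigroup Γ] (γ : ℕ → Γ) (a : ℕ) :
    ∀ m, sgProd γ a (m + 1) = γ a * sgProd γ (a + 1) m := by
  intro m
  induction m with
  | zero => simp [sgProd]
  | succ m ih =>
    show sgProd γ a (m + 1) * γ (a + (m + 1) + 1) = _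
    rw [ih, mul_assoc]
    have : a + (m + 1) + 1 = (a + 1) + m + 1 := by omega
    rw [this]
    rfl

lemma peel_right {Γ : Type*} [Semigroup Γ] {V : Type*} [NormedAddCommGroup V]
    (N : Γ → ℝ) (κ : Γ → V)
    (hκ : ∀ g h : Γ, ‖κ (g * h) - κ g - κ h‖ ≤ min (N g) (N h))
    (γ : ℕ → Γ) :
    ∀ m a, ‖κ (sgProd γ a m) - ∑ k ∈ Ico a (a + m + 1), κ (γ k)‖ ≤
      ∑ k ∈ Ico (a + 1) (a + m + 1), N (γ k) := by
  intro m
  induction m with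
  | zero => intro a; simp [sgProd]
  | succ m ih =>
    intro a
    have hsum : ∑ k ∈ Ico a (a + (m + 1) + 1), κ (γ k) =
        (∑ k ∈ Ico a (a + m + 1), κ (γ k)) + κ (γ (a + m + 1)) := by
      rw [show a + (m + 1) + 1 = (a + m + 1) + 1 by omega,
        Finset.sum_Ico_succ_top (by omega)]
    have key : κ (sgProd γ a (m + 1)) - ∑ k ∈ Ico a (a + (m + 1) + 1), κ (γ k) =
        (κ (sgProd γ a m * γ (a + m + 1)) - κ (sgProd γ a m) - κ (γ (a + m + 1)))
        + (κ (sgProd γ a m) - ∑ k ∈ Ico a (a + m + 1), κ (γ k)) := by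
      rw [hsum]; show κ (sgProd γ a m * γ (a + m + 1)) - _ = _; abel
    rw [key]
    refine le_trans (norm_add_le _ _) ?_
    have h1 := le_trans (hκ (sgProd γ a m) (γ (a + m + 1))) (min_le_right _ _)
    have h2 := ih a
    have hsumN : ∑ k ∈ Ico (a + 1) (a + (m + 1) + 1), N (γ k) =
        (∑ k ∈ Ico (a + 1) (a + m + 1), N (γ k)) + N (γ (a + m + 1)) := by
      rw [show a + (m + 1) + 1 = (a + m + 1) + 1 by omega,
        Finset.sum_Ico_succ_top (by omega)]
    rw [hsumN]; linarith

lemma peel_left {Γ : Type*} [Semigroup Γ] {V : Type*} [NormedAddCommGroup V]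
    (N : Γ → ℝ) (κ : Γ → V)
    (hκ : ∀ g h : Γ, ‖κ (g * h) - κ g - κ h‖ ≤ min (N g) (N h))
    (γ : ℕ → Γ) :
    ∀ i m a, i ≤ m →
      ‖κ (sgProd γ a m) - ∑ k ∈ Ico a (a + m + 1), κ (γ k)‖ ≤
        (∑ k ∈ Ico a (a + i), N (γ k)) +
        ‖κ (sgProd γ (a + i) (m - i)) - ∑ k ∈ Ico (a + i) (a + m + 1), κ (γ k)‖ := by
  intro i
  induction i with
  | zero => intro m a _; simp
  | succ i ih =>
    intro m a him
    obtain ⟨m', rfl⟩ : ∃ m', m = m' + 1 := ⟨m - 1, by omega⟩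
    have hsum : ∑ k ∈ Ico a (a + (m' + 1) + 1), κ (γ k) =
        κ (γ a) + ∑ k ∈ Ico (a + 1) (a + (m' + 1) + 1), κ (γ k) := by
      rw [Finset.sum_eq_sum_Ico_succ_bot (by omega)]
    have key : κ (sgProd γ a (m' + 1)) - ∑ k ∈ Ico a (a + (m' + 1) + 1), κ (γ k) =
        (κ (γ a * sgProd γ (a + 1) m') - κ (γ a) - κ (sgProd γ (a + 1) m'))
        + (κ (sgProd γ (a + 1) m') - ∑ k ∈ Ico (a + 1) (a + (m' + 1) + 1), κ (γ k)) := by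
      rw [hsum, sgProd_cons]; abel
    have heq : a + (m' + 1) + 1 = (a + 1) + m' + 1 := by omega
    calc ‖κ (sgProd γ a (m' + 1)) - ∑ k ∈ Ico a (a + (m' + 1) + 1), κ (γ k)‖
        ≤ ‖κ (γ a * sgProd γ (a + 1) m') - κ (γ a) - κ (sgProd γ (a + 1) m')‖
          + ‖κ (sgProd γ (a + 1) m') - ∑ k ∈ Ico (a + 1) (a + (m' + 1) + 1), κ (γ k)‖ := by
          rw [key]; exact norm_add_le _ _
      _ ≤ N (γ a)
          + ‖κ (sgProd γ (a + 1) m') - ∑ k ∈ Ico (a + 1) ((a + 1) + m' + 1), κ (γ k)‖ := by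
          rw [heq] at *
          exact add_le_add (le_trans (hκ _ _) (min_le_left _ _)) le_rfl
      _ ≤ N (γ a) + ((∑ k ∈ Ico (a + 1) ((a + 1) + i), N (γ k)) +
          ‖κ (sgProd γ ((a + 1) + i) (m' - i)) -
            ∑ k ∈ Ico ((a + 1) + i) ((a + 1) + m' + 1), κ (γ k)‖) := by
          exact add_le_add le_rfl (ih m' (a + 1) (by omega))
      _ = (∑ k ∈ Ico a (a + (i + 1)), N (γ k)) +
          ‖κ (sgProd γ (a + (i + 1)) (m' + 1 - (i + 1))) -
            ∑ k ∈ Ico (a + (i + 1)) (a + (m' + 1) + 1), κ (γ k)‖ := by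
          rw [show (a + 1) + i = a + (i + 1) by omega,
            show m' - i = m' + 1 - (i + 1) by omega,
            show (a + 1) + m' + 1 = a + (m' + 1) + 1 by omega,
            Finset.sum_eq_sum_Ico_succ_bot (a := a) (b := a + (i + 1)) (by omega)]
          ring

/-- If `κ : Γ → V` is `N`-almost additive with `N` subadditive and nonnegative, then the
defect of any word `(γ_a, …, γ_{b−1})` is bounded by `Σ N(γ_k) − max N(γ_k)`. -/
theorem stmt_9 {Γ : Type*} [Semigroup Γ] {V : Type*} [NormedAddCommGroup V] [CompleteSpace V]
    (N : Γ → ℝ) (hN0 : ∀ g, 0 ≤ N g) (hNsub : ∀ g h : Γ, N (g * h) ≤ N g + N h)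
    (κ : Γ → V)
    (hκ : ∀ g h : Γ, ‖κ (g * h) - κ g - κ h‖ ≤ min (N g) (N h))
    (γ : ℕ → Γ) (a b : ℕ) (hab : a < b) :
    ‖κ (sgProd γ a (b - a - 1)) - ∑ k ∈ Ico a b, κ (γ k)‖ ≤
      (∑ k ∈ Ico a b, N (γ k)) -
        (Ico a b).sup' (Finset.nonempty_Ico.mpr hab) (fun k => N (γ k)) := by
  obtain ⟨j, hjmem, hjeq⟩ :=
    Finset.exists_mem_eq_sup' (Finset.nonempty_Ico.mpr hab) (fun k => N (γ k))
  rw [hjeq]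
  rw [Finset.mem_Ico] at hjmem
  set m := b - a - 1 with hm
  have hb : a + m + 1 = b := by omega
  set i := j - a with hi
  have hai : a + i = j := by omega
  have him : i ≤ m := by omega
  have h1 := peel_left N κ hκ γ i m a him
  have h2 := peel_right N κ hκ γ (m - i) (a + i)
  rw [hai] at h1 h2
  have hjb : j + (m - i) + 1 = b := by omega
  rw [hjb] at h2
  rw [hb] at h1
  -- combine
  have hsplit : ∑ k ∈ Ico a b, N (γ k) =
      (∑ k ∈ Ico a j, N (γ k)) + (N (γ j) + ∑ k ∈ Ico (j + 1) b, N (γ k)) := by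
    rw [← Finset.sum_Ico_consecutive (fun k => N (γ k)) (by omega : a ≤ j) (by omega : j ≤ b),
      Finset.sum_eq_sum_Ico_succ_bot (by omega : j < b)]
  rw [hsplit]
  have := le_trans h1 (add_le_add le_rfl h2)
  linarith
end
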